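/- Let l ≥ 1 be an integer, M > 0, h > 0, and let F^0 and F^1 be spike-train signals, each with l nodes contained in the interval [−h, h] and with all amplitudes bounded in absolute value by 2M. Suppose their moments agree up to order 2l − 2: m_k(F^0) = m_k(F^1) for k = 0, 1, ..., 2l − 2. Then for every real s with |s| ≤ 1/(2πh), the Fourier transforms satisfy |𝓕(F^0)(s) − 𝓕(F^1)(s)| ≤ (2 · 4lM · (2π)^{2l−1} / (2l−1)!) · (|s| h)^{2l−1}. -/

import Mathlib

/-- The Fourier transform of the spike-train signal `F(x) = ∑ j, a j · δ(x − x j)`: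
the exponential sum `𝓕(F)(s) = ∑ j, a j · e^{-2πi (x j) s}`. -/
noncomputable def spikeFourier (d : ℕ) (a x : Fin d → ℝ) (s : ℝ) : ℂ :=
  ∑ j, (a j : ℂ) * Complex.exp (-2 * Real.pi * Complex.I * x j * s)

/-- The `k`-th moment `m_k(F) = ∑ j, a j · (x j)^k`. -/
def spikeMoment (d : ℕ) (a x : Fin d → ℝ) (k : ℕ) : ℝ :=
  ∑ j, a j * x j ^ k

/-!
Expanding each exponential `e^{-2πi x_j s}` to order `n = 2l − 1` turns the Fourier transform
into a polynomial in `s` whose coefficients are the moments `m_0, …, m_{n-1}`, plus a remainder.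
Equal moments make the two polynomials coincide, so the difference of the transforms is the
difference of the remainders, and for `2π|s|h ≤ 1` each of the `l` remainder terms is at most
`2 (2π|s|h)^n / n!` times the amplitude.
-/

open Finset Complex
open scoped Real

/-- The Taylor polynomial of degree `n - 1` of `spikeFourier d a x` at `0`. -/
noncomputable def spikeTaylor (d : ℕ) (a x : Fin d → ℝ) (n : ℕ) (s : ℝ) : ℂ :=
  ∑ i ∈ range n, (-2 * π * I * s) ^ i / i.factorial * spikeMoment d a x i

theorem spikeTaylor_eq_sum_mul_sum_range (d : ℕ) (a x : Fin d → ℝ) (n : ℕ) (s : ℝ) :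
    spikeTaylor d a x n s =
      ∑ j, (a j : ℂ) * ∑ i ∈ range n, (-2 * π * I * s * x j) ^ i / i.factorial := by
  simp only [spikeTaylor, spikeMoment, ofReal_sum, mul_sum]
  rw [sum_comm]
  refine sum_congr rfl fun i _ => sum_congr rfl fun j _ => ?_
  push_cast
  ring

theorem spikeTaylor_eq_of_spikeMoment_eq {d d' : ℕ} {a x : Fin d → ℝ} {a' x' : Fin d' → ℝ}
    {n : ℕ} (h : ∀ i < n, spikeMoment d a x i = spikeMoment d' a' x' i) (s : ℝ) :
    spikeTaylor d a x n s = spikeTaylor d' a' x' n s :=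
  sum_congr rfl fun i hi => by rw [h i (mem_range.1 hi)]

theorem norm_exp_sub_sum_range_le {z : ℂ} {r : ℝ} (hz : ‖z‖ ≤ r) (hr : r ≤ 1) {n : ℕ}
    (hn : 1 ≤ n) :
    ‖exp z - ∑ i ∈ range n, z ^ i / i.factorial‖ ≤ 2 * r ^ n / n.factorial := by
  have hz2 : ‖z‖ / n.succ ≤ 1 / 2 := by
    rw [div_le_div_iff₀ (by positivity) two_pos]
    have : (2 : ℝ) ≤ n.succ := by exact_mod_cast Nat.succ_le_succ hn
    nlinarith [norm_nonneg z]
  calc ‖exp z - ∑ i ∈ range n, z ^ i / i.factorial‖ ≤ ‖z‖ ^ n / n.factorial * 2 :=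
        exp_bound' hz2
    _ ≤ r ^ n / n.factorial * 2 := by gcongr
    _ = 2 * r ^ n / n.factorial := by ring

theorem norm_spikeFourier_sub_spikeTaylor_le {d : ℕ} {a x : Fin d → ℝ} {A h s : ℝ} {n : ℕ}
    (hn : 1 ≤ n) (ha : ∀ j, |a j| ≤ A) (hx : ∀ j, |x j| ≤ h)
    (hs : 2 * π * |s| * h ≤ 1) :
    ‖spikeFourier d a x s - spikeTaylor d a x n s‖ ≤
      d * (A * (2 * (2 * π * |s| * h) ^ n / n.factorial)) := by
  have hfourier : spikeFourier d a x s = ∑ j, (a j : ℂ) * exp (-2 * π * I * s * x j) := by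
    simp only [spikeFourier]
    refine sum_congr rfl fun j _ => ?_
    ring_nf
  rw [hfourier, spikeTaylor_eq_sum_mul_sum_range, ← sum_sub_distrib]
  simp only [← mul_sub]
  calc _ ≤ ∑ _j : Fin d, A * (2 * (2 * π * |s| * h) ^ n / n.factorial) := by
        refine norm_sum_le_of_le _ fun j _ => ?_
        have hzj : ‖-2 * π * I * s * x j‖ ≤ 2 * π * |s| * h := by
          simp only [norm_mul, norm_neg, norm_ofNat, norm_real, Real.norm_eq_abs, norm_I,
            abs_of_pos Real.pi_pos, mul_one]
          gcongr
          exact hx j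
        rw [norm_mul, norm_real, Real.norm_eq_abs]
        exact mul_le_mul (ha j) (norm_exp_sub_sum_range_le hzj hs hn) (norm_nonneg _)
          ((abs_nonneg _).trans (ha j))
    _ = d * (A * (2 * (2 * π * |s| * h) ^ n / n.factorial)) := by simp

theorem fourier_diff_of_equal_moments_general (l : ℕ) (hl : 1 ≤ l) (M h : ℝ)
    (hh : 0 < h)
    (a0 x0 a1 x1 : Fin l → ℝ)
    (hx0 : ∀ j, x0 j ∈ Set.Icc (-h) h)
    (hx1 : ∀ j, x1 j ∈ Set.Icc (-h) h)
    (ha0 : ∀ j, |a0 j| ≤ 2 * M)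
    (ha1 : ∀ j, |a1 j| ≤ 2 * M)
    (hmom : ∀ k : ℕ, k ≤ 2 * l - 2 → spikeMoment l a0 x0 k = spikeMoment l a1 x1 k)
    (s : ℝ) (hs : |s| ≤ 1 / (2 * Real.pi * h)) :
    ‖spikeFourier l a0 x0 s - spikeFourier l a1 x1 s‖ ≤
      2 * (4 * l * M) * (2 * Real.pi) ^ (2 * l - 1) / (Nat.factorial (2 * l - 1)) *
        (|s| * h) ^ (2 * l - 1) := by
  set n := 2 * l - 1
  have hsh : 2 * π * |s| * h ≤ 1 := by
    rw [le_div_iff₀ (by positivity)] at hs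
    linarith
  have hT : spikeTaylor l a0 x0 n s = spikeTaylor l a1 x1 n s :=
    spikeTaylor_eq_of_spikeMoment_eq (fun i hi => hmom i (by omega)) s
  have hR0 := norm_spikeFourier_sub_spikeTaylor_le (n := n) (by omega) ha0
    (fun j => abs_le.2 (hx0 j)) hsh
  have hR1 := norm_spikeFourier_sub_spikeTaylor_le (n := n) (by omega) ha1
    (fun j => abs_le.2 (hx1 j)) hsh
  calc ‖spikeFourier l a0 x0 s - spikeFourier l a1 x1 s‖
      = ‖(spikeFourier l a0 x0 s - spikeTaylor l a0 x0 n s) -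
          (spikeFourier l a1 x1 s - spikeTaylor l a1 x1 n s)‖ := by
        rw [hT, sub_sub_sub_cancel_right]
    _ ≤ _ := (norm_sub_le _ _).trans (add_le_add hR0 hR1)
    _ = _ := by
      rw [show 2 * π * |s| * h = 2 * π * (|s| * h) by ring, mul_pow]
      ring

/-- if two spike trains with `l` nodes each, all nodes in
`[−h, h]` and all amplitudes bounded by `2M` in absolute value, have equal
moments `m_k` for `k = 0, …, 2l−2`, then for `|s| ≤ 1/(2πh)` the difference of
their Fourier transforms is bounded by
`(2 · 4lM · (2π)^{2l−1} / (2l−1)!) · (|s|h)^{2l−1}`. -/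
theorem fourier_diff_of_equal_moments (l : ℕ) (hl : 1 ≤ l) (M h : ℝ)
    (hM : 0 < M) (hh : 0 < h)
    (a0 x0 a1 x1 : Fin l → ℝ)
    (hx0 : ∀ j, x0 j ∈ Set.Icc (-h) h)
    (hx1 : ∀ j, x1 j ∈ Set.Icc (-h) h)
    (ha0 : ∀ j, |a0 j| ≤ 2 * M)
    (ha1 : ∀ j, |a1 j| ≤ 2 * M)
    (hmom : ∀ k : ℕ, k ≤ 2 * l - 2 → spikeMoment l a0 x0 k = spikeMoment l a1 x1 k)
    (s : ℝ) (hs : |s| ≤ 1 / (2 * Real.pi * h)) :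
    ‖spikeFourier l a0 x0 s - spikeFourier l a1 x1 s‖ ≤
      2 * (4 * l * M) * (2 * Real.pi) ^ (2 * l - 1) / (Nat.factorial (2 * l - 1)) *
        (|s| * h) ^ (2 * l - 1) :=
  fourier_diff_of_equal_moments_general l hl M h hh a0 x0 a1 x1 hx0 hx1 ha0 ha1 hmom s hs
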